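/- arXiv:1810.01322 — 2 statements merged into one kernel-verified Lean document; each statement's English description precedes it below -/
import Mathlib

section
/- Let (a_j^{(t)})_{j∈J} be probability weights and A ⊆ J nonempty with ∑_{j∈B} a_j^{(t)} → 0 where B = J \ A. Let ℓ_j^{(t)} ≥ 0, with ℓ_j^{(t)} → L* for all j ∈ A and (ℓ_j^{(t)})_{j∈A, t} uniformly bounded. Then limsup_t [ −log(∑_{j∈J} a_j^{(t)} e^{−ℓ_j^{(t)}}) ] ≤ L*. -/
open Filter

/-- If the total weight of the "bad" models `B = J \ A` vanishes and the losses of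
the "good" models in `A` converge (boundedly) to `L*`, then the limsup of the
mixture log-loss is at most `L*`. -/
theorem limsup_mixture_log_loss_le
    {J : Type*} [Fintype J] [DecidableEq J]
    (A : Finset J) (hA : A.Nonempty)
    (a : ℕ → J → ℝ)
    (ha0 : ∀ t j, 0 ≤ a t j) (ha1 : ∀ t, ∑ j : J, a t j = 1)
    (hB : Tendsto (fun t => ∑ j ∈ Aᶜ, a t j) atTop (nhds 0))
    (ℓ : ℕ → J → ℝ) (hℓ0 : ∀ t j, 0 ≤ ℓ t j)
    (Lstar : ℝ)
    (hconv : ∀ j ∈ A, Tendsto (fun t => ℓ t j) atTop (nhds Lstar))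
    (hbdd : ∃ M : ℝ, ∀ t, ∀ j ∈ A, ℓ t j ≤ M) :
    Filter.limsup (fun t => -Real.log (∑ j : J, a t j * Real.exp (-ℓ t j)))
      atTop ≤ Lstar := by
  set f : ℕ → ℝ := fun t => -Real.log (∑ j : J, a t j * Real.exp (-ℓ t j)) with hf
  refine le_of_forall_pos_le_add ?_
  intro ε hε
  have hev : ∀ᶠ t in atTop, f t ≤ Lstar + ε := by
    have h1 : ∀ᶠ t in atTop, ∀ j ∈ A, ℓ t j ≤ Lstar + ε / 2 := by
      rw [eventually_all_finset]
      intro j hj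
      have := (hconv j hj).eventually (eventually_le_nhds (by linarith : Lstar < Lstar + ε / 2))
      exact this
    have hpos : (0:ℝ) < 1 - Real.exp (-(ε/2)) := by
      have : Real.exp (-(ε/2)) < 1 := Real.exp_lt_one_iff.mpr (by linarith)
      linarith
    have h2 : ∀ᶠ t in atTop, (∑ j ∈ Aᶜ, a t j) < 1 - Real.exp (-(ε/2)) :=
      hB.eventually (eventually_lt_nhds hpos)
    filter_upwards [h1, h2] with t ht1 ht2
    have key : Real.exp (-(Lstar + ε)) ≤ ∑ j : J, a t j * Real.exp (-ℓ t j) := by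
      have hAsum : (∑ j ∈ A, a t j) = 1 - ∑ j ∈ Aᶜ, a t j := by
        have := Finset.sum_add_sum_compl A (a t)
        rw [ha1 t] at this
        linarith
      have hlb : (∑ j ∈ A, a t j) * Real.exp (-(Lstar + ε/2))
          ≤ ∑ j ∈ A, a t j * Real.exp (-ℓ t j) := by
        rw [Finset.sum_mul]
        apply Finset.sum_le_sum
        intro j hj
        have : Real.exp (-(Lstar + ε/2)) ≤ Real.exp (-ℓ t j) :=
          Real.exp_le_exp.mpr (by linarith [ht1 j hj])
        nlinarith [ha0 t j]
      have hA2 : Real.exp (-(ε/2)) ≤ ∑ j ∈ A, a t j := by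
        rw [hAsum]; linarith
      have h3 : Real.exp (-(Lstar + ε)) ≤ (∑ j ∈ A, a t j) * Real.exp (-(Lstar + ε/2)) := by
        have : Real.exp (-(Lstar + ε)) = Real.exp (-(ε/2)) * Real.exp (-(Lstar + ε/2)) := by
          rw [← Real.exp_add]; ring_nf
        rw [this]
        exact mul_le_mul_of_nonneg_right hA2 (Real.exp_pos _).le
      have hrest : ∑ j ∈ A, a t j * Real.exp (-ℓ t j) ≤ ∑ j : J, a t j * Real.exp (-ℓ t j) := by
        apply Finset.sum_le_sum_of_subset_of_nonneg (Finset.subset_univ A)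
        intro j _ _
        exact mul_nonneg (ha0 t j) (Real.exp_pos _).le
      linarith
    have hlog : -(Lstar + ε) ≤ Real.log (∑ j : J, a t j * Real.exp (-ℓ t j)) := by
      calc -(Lstar + ε) = Real.log (Real.exp (-(Lstar + ε))) := (Real.log_exp _).symm
        _ ≤ _ := Real.log_le_log (Real.exp_pos _) key
    simp only [hf]
    linarith
  have hf0 : ∀ t, 0 ≤ f t := by
    intro t
    have hsum_le : (∑ j : J, a t j * Real.exp (-ℓ t j)) ≤ 1 := by
      rw [← ha1 t]
      apply Finset.sum_le_sum
      intro j _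
      have h1 : Real.exp (-ℓ t j) ≤ 1 := by
        rw [Real.exp_le_one_iff]; linarith [hℓ0 t j]
      nlinarith [ha0 t j]
    simp only [hf, neg_nonneg]
    exact Real.log_nonpos
      (Finset.sum_nonneg fun j _ => mul_nonneg (ha0 t j) (Real.exp_pos _).le) hsum_le
  exact limsup_le_of_le (isCoboundedUnder_le_of_le atTop hf0) hev
end

section
/- Suppose L : ℝ^d → ℝ is convex, C², with ∇²L(θ) ⪯ λI everywhere, a minimizer θ* with L(θ*) = L*, and ∇²L(θ*) ≻ 0. Run gradient descent copies θ_j^{(t+1)} = θ_j^{(t)} − η_j ∇L(θ_j^{(t)}) for j = 1,…,N with Bayesian-model-averaging weights a_j^{(t)} ∝ exp(−N_data ∑_{s≤t} L̂(θ_j^{(s)})) (log-loss weights), and define the mixture loss L(θ_Alrao^{(t)}) = (1/N_data)∑_i −log ∑_j a_j^{(t)} exp(−ℓ(C_{θ_j^{(t)}}(x_i), y_i)). If at least one η_j < 1/λ, then limsup_t L(θ_Alrao^{(t)}) ≤ L*. -/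
/-!
By Jensen's inequality for `exp`, the log-loss of the Bayesian mixture is at most the posterior
average `∑ⱼ aⱼ(t) L(θⱼ(t))`, so it suffices that `aⱼ(t) (L(θⱼ(t)) - L*) → 0` for every copy `j`.

For a convex loss with `λ`-Lipschitz gradient and a step `η ≤ 1/λ`, one gradient step satisfies
`L(x - η∇L(x)) - L(z) ≤ (‖x - z‖² - ‖x - η∇L(x) - z‖²) / (2η)`. Summing, the cumulative excess
loss of the copy `j₀` with the small learning rate stays below `C = ‖θ_{j₀}(0) - θ*‖² / (2η_{j₀})`.
Posterior weights depend only on differences of cumulative losses, so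
`aⱼ(t) ≤ exp (Ndata (C - Eⱼ(t)))`, where `Eⱼ(t)` is the cumulative excess loss of copy `j`.
If `Eⱼ` stays bounded, its increments `L(θⱼ(t)) - L*` tend to `0`; otherwise `Eⱼ → ∞`, and the
weighted increment is at most `exp (Ndata C) Eⱼ(t) exp (-Ndata Eⱼ(t)) → 0`.
-/

open Filter Topology RealInnerProductSpace Finset Real Set NNReal

theorem Finset.sum_Icc_one_eq_sum_range {M : Type*} [AddCommMonoid M] (f : ℕ → M) (t : ℕ) :
    ∑ s ∈ Icc 1 t, f s = ∑ s ∈ range t, f (s + 1) := by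
  induction t with
  | zero => simp
  | succ t ih => rw [sum_Icc_succ_top (by omega), ih, sum_range_succ]

section GradientDescent

variable {E : Type*} [NormedAddCommGroup E] [InnerProductSpace ℝ E] [CompleteSpace E]
  {f : E → ℝ}

theorem ConvexOn.add_inner_gradient_le (hconv : ConvexOn ℝ univ f) (hf : Differentiable ℝ f)
    (x y : E) : f x + ⟪gradient f x, y - x⟫ ≤ f y := by
  set φ : ℝ →ᵃ[ℝ] E := AffineMap.lineMap x y
  have hline : HasDerivAt (f ∘ φ) ⟪gradient f x, y - x⟫ 0 := by
    rw [inner_gradient_left]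
    exact (hf x).hasFDerivAt.comp_hasDerivAt_of_eq (0 : ℝ) AffineMap.hasDerivAt_lineMap
      (by simp [φ])
  have := (hconv.comp_affineMap φ).le_slope_of_hasDerivAt (mem_univ 0) (mem_univ 1) zero_lt_one
    hline
  simp only [slope_def_field, Function.comp_apply, φ, AffineMap.lineMap_apply_one,
    AffineMap.lineMap_apply_zero, sub_zero, div_one] at this
  linarith

theorem LipschitzWith.image_add_le_of_gradient {K : ℝ≥0} (hlip : LipschitzWith K (gradient f))
    (hf : Differentiable ℝ f) (x v : E) :
    f (x + v) ≤ f x + ⟪gradient f x, v⟫ + K / 2 * ‖v‖ ^ 2 := by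
  set g : ℝ → ℝ := fun s => f (x + s • v) - s * ⟪gradient f x, v⟫ - K / 2 * s ^ 2 * ‖v‖ ^ 2
  have hderiv (s : ℝ) :
      HasDerivAt g (⟪gradient f (x + s • v) - gradient f x, v⟫ - K * s * ‖v‖ ^ 2) s := by
    have hcurve : HasDerivAt (fun s : ℝ => x + s • v) v s := by
      simpa using ((hasDerivAt_id s).smul_const v).const_add x
    have hfs := (hf (x + s • v)).hasFDerivAt.comp_hasDerivAt s hcurve
    rw [← inner_gradient_left] at hfs
    refine ((hfs.sub ((hasDerivAt_id s).mul_const ⟪gradient f x, v⟫)).sub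
      (((hasDerivAt_pow 2 s).const_mul (K / 2 : ℝ)).mul_const (‖v‖ ^ 2))).congr_deriv ?_
    rw [inner_sub_left]; simp only [Nat.cast_ofNat, one_mul]; ring
  have hanti : AntitoneOn g (Ici 0) := by
    refine antitoneOn_of_hasDerivWithinAt_nonpos (convex_Ici 0)
      (fun s _ => (hderiv s).continuousAt.continuousWithinAt)
      (fun s _ => (hderiv s).hasDerivWithinAt) fun s hs => sub_nonpos.2 ?_
    rw [interior_Ici, Set.mem_Ioi] at hs
    have hgrad : ‖gradient f (x + s • v) - gradient f x‖ ≤ K * (s * ‖v‖) := by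
      simpa [norm_smul, abs_of_pos hs] using hlip.norm_sub_le (x + s • v) x
    calc ⟪gradient f (x + s • v) - gradient f x, v⟫
        ≤ ‖gradient f (x + s • v) - gradient f x‖ * ‖v‖ := real_inner_le_norm _ _
      _ ≤ K * (s * ‖v‖) * ‖v‖ := by gcongr
      _ = K * s * ‖v‖ ^ 2 := by ring
  have := hanti self_mem_Ici (mem_Ici.2 zero_le_one) zero_le_one
  simp only [g, one_smul, zero_smul, add_zero, one_mul, one_pow, mul_one, zero_mul, sub_zero,
    zero_pow two_ne_zero] at this
  linarith

theorem ConvexOn.image_gradient_step_sub_le {K : ℝ≥0} (hconv : ConvexOn ℝ univ f)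
    (hf : Differentiable ℝ f) (hlip : LipschitzWith K (gradient f)) {η : ℝ} (hη : 0 < η)
    (hηK : η * K ≤ 1) (x z : E) :
    f (x - η • gradient f x) - f z ≤
      (‖x - z‖ ^ 2 - ‖x - η • gradient f x - z‖ ^ 2) / (2 * η) := by
  set g := gradient f x
  have hdescent : f (x - η • g) ≤ f x - η / 2 * ‖g‖ ^ 2 := by
    have h := hlip.image_add_le_of_gradient hf x (-(η • g))
    rw [← sub_eq_add_neg, inner_neg_right, inner_smul_right, real_inner_self_eq_norm_sq,
      norm_neg, norm_smul, Real.norm_eq_abs, abs_of_pos hη] at h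
    nlinarith [sq_nonneg ‖g‖]
  have hsupport : f x + ⟪g, z - x⟫ ≤ f z := hconv.add_inner_gradient_le hf x z
  have hexpand : ‖x - η • g - z‖ ^ 2 = ‖x - z‖ ^ 2 - 2 * η * ⟪g, x - z⟫ + η ^ 2 * ‖g‖ ^ 2 := by
    rw [sub_right_comm, norm_sub_sq_real, inner_smul_right, norm_smul, Real.norm_eq_abs,
      abs_of_pos hη, real_inner_comm]
    ring
  have hzx : ⟪g, z - x⟫ = -⟪g, x - z⟫ := by rw [← inner_neg_right, neg_sub]
  rw [hexpand, le_div_iff₀ (by positivity)]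
  nlinarith

theorem ConvexOn.sum_range_image_sub_le_of_gradient_descent {K : ℝ≥0}
    (hconv : ConvexOn ℝ univ f) (hf : Differentiable ℝ f) (hlip : LipschitzWith K (gradient f))
    {η : ℝ} (hη : 0 < η) (hηK : η * K ≤ 1) (x : ℕ → E)
    (hx : ∀ t, x (t + 1) = x t - η • gradient f (x t)) (z : E) (T : ℕ) :
    ∑ t ∈ range T, (f (x (t + 1)) - f z) ≤ ‖x 0 - z‖ ^ 2 / (2 * η) := by
  calc ∑ t ∈ range T, (f (x (t + 1)) - f z)
      ≤ ∑ t ∈ range T, (‖x t - z‖ ^ 2 - ‖x (t + 1) - z‖ ^ 2) / (2 * η) := by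
        gcongr with t
        rw [hx]
        exact hconv.image_gradient_step_sub_le hf hlip hη hηK (x t) z
    _ = (‖x 0 - z‖ ^ 2 - ‖x T - z‖ ^ 2) / (2 * η) := by
        rw [← sum_div, sum_range_sub' (fun t => ‖x t - z‖ ^ 2)]
    _ ≤ ‖x 0 - z‖ ^ 2 / (2 * η) := by gcongr; linarith [sq_nonneg ‖x T - z‖]

end GradientDescent

section Softmax

variable {ι : Type*} [Fintype ι]

noncomputable def softmax (c : ι → ℝ) (j : ι) : ℝ := exp (c j) / ∑ k, exp (c k)

theorem softmax_add_const (c : ι → ℝ) (b : ℝ) : softmax (fun k => c k + b) = softmax c := by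
  ext j
  simp only [softmax, exp_add, ← sum_mul]
  exact mul_div_mul_right _ _ (exp_pos b).ne'

theorem softmax_pos [Nonempty ι] (c : ι → ℝ) (j : ι) : 0 < softmax c j :=
  div_pos (exp_pos _) (sum_pos (fun _ _ => exp_pos _) univ_nonempty)

theorem sum_softmax [Nonempty ι] (c : ι → ℝ) : ∑ j, softmax c j = 1 := by
  simp only [softmax]
  rw [← sum_div]
  exact div_self (sum_pos (fun _ _ => exp_pos _) univ_nonempty).ne'

theorem softmax_le_exp_sub (c : ι → ℝ) (j k : ι) : softmax c j ≤ exp (c j - c k) := by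
  rw [exp_sub]
  exact div_le_div_of_nonneg_left (exp_pos _).le (exp_pos _)
    (single_le_sum (fun k _ => (exp_pos (c k)).le) (mem_univ k))

theorem softmax_le_one (c : ι → ℝ) (j : ι) : softmax c j ≤ 1 := by
  simpa using softmax_le_exp_sub c j j

theorem neg_log_sum_mul_exp_neg_le {w x : ι → ℝ} (hw0 : ∀ j, 0 ≤ w j) (hw1 : ∑ j, w j = 1) :
    -log (∑ j, w j * exp (-x j)) ≤ ∑ j, w j * x j := by
  have hjensen : exp (∑ j, w j * -x j) ≤ ∑ j, w j * exp (-x j) :=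
    convexOn_exp.map_sum_le (fun j _ => hw0 j) hw1 (fun j _ => mem_univ _)
  have := log_le_log (exp_pos _) hjensen
  rw [log_exp] at this
  simp only [mul_neg, sum_neg_distrib] at this
  linarith

theorem neg_log_sum_mul_exp_neg_nonneg {w x : ι → ℝ} (hw0 : ∀ j, 0 ≤ w j)
    (hw1 : ∑ j, w j = 1) (hx : ∀ j, 0 ≤ x j) : 0 ≤ -log (∑ j, w j * exp (-x j)) := by
  refine neg_nonneg.2 (log_nonpos (sum_nonneg fun j _ => mul_nonneg (hw0 j) (exp_pos _).le) ?_)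
  calc ∑ j, w j * exp (-x j) ≤ ∑ j, w j := by
        refine sum_le_sum fun j _ => ?_
        exact mul_le_of_le_one_right (hw0 j) (exp_le_one_iff.2 (neg_nonpos.2 (hx j)))
    _ = 1 := hw1

theorem mul_sum_neg_log_sum_mul_exp_neg_le {κ : Type*} [Fintype κ] {w : ι → ℝ}
    (hw0 : ∀ j, 0 ≤ w j) (hw1 : ∑ j, w j = 1) (ℓ : κ → ι → ℝ) {m : ℝ} (hm : 0 ≤ m) :
    m * ∑ i, -log (∑ j, w j * exp (-ℓ i j)) ≤ ∑ j, w j * (m * ∑ i, ℓ i j) := by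
  calc m * ∑ i, -log (∑ j, w j * exp (-ℓ i j)) ≤ m * ∑ i, ∑ j, w j * ℓ i j := by
        gcongr with i
        exact neg_log_sum_mul_exp_neg_le hw0 hw1
    _ = ∑ j, w j * (m * ∑ i, ℓ i j) := by
        rw [sum_comm]
        simp only [mul_sum, mul_left_comm]

theorem softmax_neg_mul_sum_Icc_eq_sum_range_sub (F : ι → ℕ → ℝ) (c b : ℝ) (t : ℕ) :
    softmax (fun k => -c * ∑ s ∈ Icc 1 t, F k s) =
      softmax (fun k => -c * ∑ s ∈ range t, (F k (s + 1) - b)) := by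
  rw [← softmax_add_const _ (c * (t * b))]
  congr 1; ext k
  rw [sum_Icc_one_eq_sum_range, sum_sub_distrib, sum_const, card_range, nsmul_eq_mul]
  ring

theorem tendsto_mul_of_le_exp_neg_partial_sum {e w : ℕ → ℝ} {c K : ℝ} (hc : 0 < c)
    (he : ∀ t, 0 ≤ e t) (hw0 : ∀ t, 0 ≤ w t) (hw1 : ∀ t, w t ≤ 1)
    (hwK : ∀ t, w t ≤ K * exp (-c * ∑ s ∈ range (t + 1), e s)) :
    Tendsto (fun t => w t * e t) atTop (𝓝 0) := by
  have hnonneg (t : ℕ) : 0 ≤ w t * e t := mul_nonneg (hw0 t) (he t)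
  by_cases hsum : Summable e
  · exact squeeze_zero hnonneg (fun t => mul_le_of_le_one_left (he t) (hw1 t))
      hsum.tendsto_atTop_zero
  set S := fun t => ∑ s ∈ range (t + 1), e s
  have hS : Tendsto S atTop atTop :=
    ((not_summable_iff_tendsto_nat_atTop_of_nonneg he).1 hsum).comp (tendsto_add_atTop_nat 1)
  have hdecay : Tendsto (fun t => K / c * (c * S t * exp (-(c * S t)))) atTop (𝓝 0) := by
    simpa using ((tendsto_pow_mul_exp_neg_atTop_nhds_zero 1).comp
      (hS.const_mul_atTop hc)).const_mul (K / c)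
  refine squeeze_zero hnonneg (fun t => ?_) hdecay
  have he_le : e t ≤ S t := single_le_sum (fun s _ => he s) (self_mem_range_succ t)
  calc w t * e t ≤ K * exp (-c * S t) * S t :=
        mul_le_mul (hwK t) he_le (he t) ((hw0 t).trans (hwK t))
    _ = K / c * (c * S t * exp (-(c * S t))) := by field_simp

theorem tendsto_softmax_neg_partial_sum_mul {e : ι → ℕ → ℝ} {c : ℝ} (hc : 0 < c)
    (he : ∀ j t, 0 ≤ e j t) {j₀ : ι} (hj₀ : Summable (e j₀)) (j : ι) :
    Tendsto (fun t => softmax (fun k => -c * ∑ s ∈ range (t + 1), e k s) j * e j t)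
      atTop (𝓝 0) := by
  have : Nonempty ι := ⟨j₀⟩
  refine tendsto_mul_of_le_exp_neg_partial_sum hc (he j) (fun t => (softmax_pos _ _).le)
    (fun t => softmax_le_one _ _) (K := exp (c * ∑' s, e j₀ s)) fun t => ?_
  have hregret := hj₀.sum_le_tsum (range (t + 1)) fun s _ => he j₀ s
  refine (softmax_le_exp_sub _ j j₀).trans ?_
  rw [← exp_add]
  exact exp_le_exp.2 (by nlinarith)

theorem tendsto_sum_softmax_neg_mul_sum_Icc_mul_sub {F : ι → ℕ → ℝ} {b c : ℝ} (hc : 0 < c)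
    (hF : ∀ k s, b ≤ F k s) {j₀ : ι} (hj₀ : Summable fun s => F j₀ (s + 1) - b) :
    Tendsto (fun t => ∑ j, softmax (fun k => -c * ∑ s ∈ Icc 1 t, F k s) j * (F j t - b))
      atTop (𝓝 0) := by
  rw [← tendsto_add_atTop_iff_nat 1]
  simpa only [softmax_neg_mul_sum_Icc_eq_sum_range_sub _ _ b, sum_const_zero] using
    tendsto_finsetSum univ fun j _ => tendsto_softmax_neg_partial_sum_mul
      (e := fun k s => F k (s + 1) - b) hc (fun k s => sub_nonneg.2 (hF _ _)) hj₀ j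

end Softmax

theorem limsup_le_of_le_of_tendsto {α : Type*} {f : Filter α} [f.NeBot] {u v : α → ℝ} {b l : ℝ}
    (hb : ∀ x, b ≤ u x) (huv : ∀ x, u x ≤ v x) (hv : Tendsto v f (𝓝 l)) : limsup u f ≤ l :=
  (limsup_le_limsup (Eventually.of_forall huv) (isBoundedUnder_of ⟨b, hb⟩).isCoboundedUnder_le
    hv.isBoundedUnder_le).trans_eq hv.limsup_eq

theorem alrao_convergence_general
    {d : ℕ} (Ndata : ℕ) (hNdata : 0 < Ndata)
    (ℓi : Fin Ndata → EuclideanSpace ℝ (Fin d) → ℝ)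
    (hℓi : ∀ i θ, 0 ≤ ℓi i θ)
    (L : EuclideanSpace ℝ (Fin d) → ℝ)
    (hL : ∀ θ, L θ = (1 / (Ndata : ℝ)) * ∑ i, ℓi i θ)
    (hconv : ConvexOn ℝ Set.univ L)
    (hC2 : ContDiff ℝ 2 L)
    (lam : ℝ) (hlam : 0 < lam)
    (hlip : LipschitzWith (Real.toNNReal lam) (gradient L))
    (θstar : EuclideanSpace ℝ (Fin d)) (Lstar : ℝ)
    (hmin : ∀ θ, L θstar ≤ L θ) (hLstar : L θstar = Lstar)
    (N : ℕ) (η : Fin N → ℝ) (hη0 : ∀ j, 0 < η j)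
    (j0 : Fin N) (hη1 : η j0 < 1 / lam)
    (θ : Fin N → ℕ → EuclideanSpace ℝ (Fin d))
    (hstep : ∀ j t, θ j (t + 1) = θ j t - η j • gradient L (θ j t))
    (a : ℕ → Fin N → ℝ)
    (ha : ∀ t j, a t j =
      Real.exp (-(Ndata : ℝ) * ∑ s ∈ Finset.Icc 1 t, L (θ j s)) /
        ∑ k, Real.exp (-(Ndata : ℝ) * ∑ s ∈ Finset.Icc 1 t, L (θ k s)))
    (Lalrao : ℕ → ℝ)
    (hLalrao : ∀ t, Lalrao t =
      (1 / (Ndata : ℝ)) * ∑ i,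
        -Real.log (∑ j, a t j * Real.exp (-(ℓi i (θ j t))))) :
    Filter.limsup Lalrao atTop ≤ Lstar := by
  subst hLstar
  have : Nonempty (Fin N) := ⟨j0⟩
  have hn : (0 : ℝ) < Ndata := Nat.cast_pos.2 hNdata
  have hηK : η j0 * lam.toNNReal ≤ 1 := by
    rw [Real.coe_toNNReal _ hlam.le]
    exact (le_div_iff₀ hlam).1 hη1.le
  have hgood : Summable fun s => L (θ j0 (s + 1)) - L θstar :=
    summable_of_sum_range_le (fun s => sub_nonneg.2 (hmin _))
      (hconv.sum_range_image_sub_le_of_gradient_descent (hC2.differentiable (by norm_num)) hlip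
        (hη0 j0) hηK (θ j0) (hstep j0) θstar)
  have hposterior (t : ℕ) : a t = softmax fun k => -(Ndata : ℝ) * ∑ s ∈ Icc 1 t, L (θ k s) :=
    funext (ha t)
  have hweights (t : ℕ) : (∀ j, 0 ≤ a t j) ∧ ∑ j, a t j = 1 := by
    rw [hposterior]
    exact ⟨fun j => (softmax_pos _ j).le, sum_softmax _⟩
  have hupper (t : ℕ) : Lalrao t ≤ L θstar + ∑ j, a t j * (L (θ j t) - L θstar) := by
    have hmix := mul_sum_neg_log_sum_mul_exp_neg_le (hweights t).1 (hweights t).2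
      (fun i j => ℓi i (θ j t)) (by positivity : (0 : ℝ) ≤ 1 / Ndata)
    simp only [← hL, ← hLalrao] at hmix
    simp only [mul_sub, sum_sub_distrib, ← sum_mul, (hweights t).2, one_mul]
    linarith
  have hlower (t : ℕ) : 0 ≤ Lalrao t := by
    rw [hLalrao]
    exact mul_nonneg (by positivity) (sum_nonneg fun i _ => neg_log_sum_mul_exp_neg_nonneg
      (hweights t).1 (hweights t).2 fun j => hℓi i _)
  refine limsup_le_of_le_of_tendsto hlower hupper ?_
  simp only [hposterior]
  simpa using tendsto_const_nhds.add
    (tendsto_sum_softmax_neg_mul_sum_Icc_mul_sub hn (fun k s => hmin _) hgood)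

/-- Alrao convergence theorem (full-batch, convex case): several copies of the
classifier are trained by gradient descent with fixed learning rates `η j`, and
combined by Bayesian model averaging of the log-losses.  If the loss is convex,
`C²`, with `λ`-Lipschitz gradient (`∇²L ⪯ λ I`), a minimizer `θ*` with positive
definite Hessian, and at least one learning rate satisfies `η j < 1/λ`, then the
limsup of the Alrao mixture loss is at most the optimal loss `L*`. -/
theorem alrao_convergence
    {d : ℕ} (Ndata : ℕ) (hNdata : 0 < Ndata)
    (ℓi : Fin Ndata → EuclideanSpace ℝ (Fin d) → ℝ)
    (hℓi : ∀ i θ, 0 ≤ ℓi i θ)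
    (L : EuclideanSpace ℝ (Fin d) → ℝ)
    (hL : ∀ θ, L θ = (1 / (Ndata : ℝ)) * ∑ i, ℓi i θ)
    (hconv : ConvexOn ℝ Set.univ L)
    (hC2 : ContDiff ℝ 2 L)
    (lam : ℝ) (hlam : 0 < lam)
    (hlip : LipschitzWith (Real.toNNReal lam) (gradient L))
    (θstar : EuclideanSpace ℝ (Fin d)) (Lstar : ℝ)
    (hmin : ∀ θ, L θstar ≤ L θ) (hLstar : L θstar = Lstar)
    (hposdef : ∀ v : EuclideanSpace ℝ (Fin d), v ≠ 0 →
      0 < ⟪(fderiv ℝ (gradient L) θstar) v, v⟫)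
    (N : ℕ) (η : Fin N → ℝ) (hη0 : ∀ j, 0 < η j)
    (j0 : Fin N) (hη1 : η j0 < 1 / lam)
    (θ : Fin N → ℕ → EuclideanSpace ℝ (Fin d))
    (hstep : ∀ j t, θ j (t + 1) = θ j t - η j • gradient L (θ j t))
    (a : ℕ → Fin N → ℝ)
    (ha : ∀ t j, a t j =
      Real.exp (-(Ndata : ℝ) * ∑ s ∈ Finset.Icc 1 t, L (θ j s)) /
        ∑ k, Real.exp (-(Ndata : ℝ) * ∑ s ∈ Finset.Icc 1 t, L (θ k s)))
    (Lalrao : ℕ → ℝ)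
    (hLalrao : ∀ t, Lalrao t =
      (1 / (Ndata : ℝ)) * ∑ i,
        -Real.log (∑ j, a t j * Real.exp (-(ℓi i (θ j t))))) :
    Filter.limsup Lalrao atTop ≤ Lstar :=
  alrao_convergence_general Ndata hNdata ℓi hℓi L hL hconv hC2 lam hlam hlip θstar Lstar hmin hLstar
    N η hη0 j0 hη1 θ hstep a ha Lalrao hLalrao
end
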